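/- Let T be a minimal strongly slide-free G-tree. Then no vertex stabilizer G_v fixes an edge of T; consequently distinct vertices have distinct stabilizers, and each vertex stabilizer is a maximal elliptic subgroup of G. -/

import Mathlib

open SimpleGraph

section GTree

variable (G : Type*) [Group G]

/-- The group action preserves adjacency: `G` acts on the graph by automorphisms. -/
def ActsOnGraph {V : Type*} [MulAction G V] (T : SimpleGraph V) : Prop :=
  ∀ (g : G) (u v : V), T.Adj u v → T.Adj (g • u) (g • v)

/-- The action is without inversions: no element exchanges the two endpoints of an edge. -/
def NoInversions {V : Type*} [MulAction G V] (T : SimpleGraph V) : Prop :=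
  ∀ (g : G) (u v : V), T.Adj u v → ¬(g • u = v ∧ g • v = u)

/-- A subgroup is elliptic if it fixes a vertex. -/
def IsElliptic (V : Type*) [MulAction G V] (H : Subgroup G) : Prop :=
  ∃ v : V, ∀ h ∈ H, h • v = v

/-- The stabilizer of the edge with endpoints `u`, `v` (for an action without
inversions this is the pointwise stabilizer of the edge). -/
def edgeStab {V : Type*} [MulAction G V] (u v : V) : Subgroup G :=
  MulAction.stabilizer G u ⊓ MulAction.stabilizer G v

/-- The set of vertices on the unique path between two vertices of a tree. -/
noncomputable def seg {V : Type*} {T : SimpleGraph V} (hT : T.IsTree) (x y : V) : Set V :=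
  {z | z ∈ ((hT.existsUnique_path x y).exists.choose).support}

/-- A set of vertices is a subtree if it contains the arc between any two of its points. -/
def IsSubtree {V : Type*} {T : SimpleGraph V} (hT : T.IsTree) (S : Set V) : Prop :=
  ∀ x ∈ S, ∀ y ∈ S, seg hT x y ⊆ S

/-- A set of vertices is invariant under the group action. -/
def GInvariant {V : Type*} [MulAction G V] (S : Set V) : Prop :=
  ∀ (g : G), ∀ v ∈ S, g • v ∈ S

/-- The action is minimal: there is no proper nonempty invariant subtree. -/
def MinimalAction {V : Type*} [MulAction G V] {T : SimpleGraph V} (hT : T.IsTree) : Prop :=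
  ∀ S : Set V, S.Nonempty → GInvariant G S → IsSubtree hT S → S = Set.univ

/-- Strongly slide-free: if two edges at a common vertex `v` have nested
stabilizers, they are in the same `G_v`-orbit. -/
def StronglySlideFree {V : Type*} [MulAction G V] (T : SimpleGraph V) : Prop :=
  ∀ v a b : V, T.Adj v a → T.Adj v b → edgeStab G v a ≤ edgeStab G v b →
    ∃ g ∈ MulAction.stabilizer G v, g • a = b

/-- Reduced: for every edge whose stabilizer equals the stabilizer of one of its
endpoints, the two endpoints are in the same `G`-orbit. -/
def Reduced {V : Type*} [MulAction G V] (T : SimpleGraph V) : Prop :=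
  ∀ u v : V, T.Adj u v → edgeStab G u v = MulAction.stabilizer G v → ∃ g : G, g • u = v

end GTree

/-!
If `G_v ≤ G_w` for an edge `vw`, strong slide-freeness forces every edge at `v` into the
`G_v`-orbit of `vw`, which is `{vw}`; so every translate of `v` is a leaf. Leaves lie on no
arc as interior points, so removing the orbit of `v` leaves a nonempty invariant subtree
(it contains `w`, as otherwise the action would invert the edge `vw`), contradicting
minimality. Hence `G_v ≤ G_w` forces `v = w`: otherwise `G_v` fixes the arc from `v` to `w`,
in particular its first edge.
-/

namespace SimpleGraph

variable {V : Type*} {T : SimpleGraph V}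

theorem Walk.IsPath.exists_ne_adj_of_mem_support {x y z : V} {p : T.Walk x y} (hp : p.IsPath)
    (hz : z ∈ p.support) (hzx : z ≠ x) (hzy : z ≠ y) :
    ∃ u₁ u₂, u₁ ≠ u₂ ∧ T.Adj z u₁ ∧ T.Adj z u₂ := by
  classical
  obtain ⟨u₁, hadj₁, q, hq⟩ := Walk.exists_eq_cons_of_ne hzx (p.takeUntil z hz).reverse
  obtain ⟨u₂, hadj₂, r, hr⟩ := Walk.exists_eq_cons_of_ne hzy (p.dropUntil z hz)
  refine ⟨u₁, u₂, ?_, hadj₁, hadj₂⟩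
  have hu₁ : u₁ ∈ (p.takeUntil z hz).support := by
    rw [← List.mem_reverse, ← Walk.support_reverse, hq]
    simp
  have hu₂ : u₂ ∈ (p.dropUntil z hz).support.tail := by
    rw [hr]
    simp
  have hnodup : ((p.takeUntil z hz).support ++ (p.dropUntil z hz).support.tail).Nodup := by
    rw [← Walk.support_append, p.take_spec hz]
    exact hp.support_nodup
  rintro rfl
  exact (List.nodup_append'.mp hnodup).2.2 hu₁ hu₂

theorem IsTree.apply_eq_self_of_mem_seg (hT : T.IsTree) {f : T →g T}
    (hf : Function.Injective f) {x y z : V} (hx : f x = x) (hy : f y = y)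
    (hz : z ∈ seg hT x y) : f z = z := by
  set p := (hT.existsUnique_path x y).exists.choose
  have hp : p.IsPath := (hT.existsUnique_path x y).exists.choose_spec
  have hfp : (p.map f).copy hx hy = p :=
    (hT.existsUnique_path x y).unique ((Walk.isPath_copy _ _ _).mpr (hp.map hf)) hp
  have hsupport : p.support.map f = p.support.map id := by
    rw [List.map_id, ← Walk.support_map, ← Walk.support_copy _ hx hy, hfp]
  exact List.map_inj_left.mp hsupport z hz

end SimpleGraph

section Stabilizers

variable {G V : Type*} [Group G] [MulAction G V] {T : SimpleGraph V}

theorem ActsOnGraph.adj_smul_iff (hact : ActsOnGraph G T) (g : G) {u v : V} :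
    T.Adj (g • u) (g • v) ↔ T.Adj u v :=
  ⟨fun h => by simpa using hact g⁻¹ _ _ h, hact g u v⟩

theorem stabilizer_inf_le_of_mem_seg (hT : T.IsTree) (hact : ActsOnGraph G T) {x y z : V}
    (hz : z ∈ seg hT x y) :
    MulAction.stabilizer G x ⊓ MulAction.stabilizer G y ≤ MulAction.stabilizer G z :=
  fun g ⟨hgx, hgy⟩ =>
    hT.apply_eq_self_of_mem_seg (f := ⟨(g • ·), hact g _ _⟩) (MulAction.injective g) hgx hgy hz

theorem exists_adj_stabilizer_le (hT : T.IsTree) (hact : ActsOnGraph G T) {v w : V}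
    (hne : v ≠ w) (hle : MulAction.stabilizer G v ≤ MulAction.stabilizer G w) :
    ∃ x, T.Adj v x ∧ MulAction.stabilizer G v ≤ MulAction.stabilizer G x := by
  obtain ⟨x, hadj, p, hp⟩ :=
    Walk.exists_eq_cons_of_ne hne (hT.existsUnique_path v w).exists.choose
  have hx : x ∈ seg hT v w := by simp [seg, hp]
  exact ⟨x, hadj, le_inf le_rfl hle |>.trans (stabilizer_inf_le_of_mem_seg hT hact hx)⟩

theorem isSubtree_compl_of_subsingleton_adj (hT : T.IsTree) {A : Set V}
    (hA : ∀ a ∈ A, ∀ u₁ u₂, T.Adj a u₁ → T.Adj a u₂ → u₁ = u₂) : IsSubtree hT Aᶜ := by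
  intro x hx y hy z hz hzA
  obtain ⟨u₁, u₂, hne, h₁, h₂⟩ :=
    (hT.existsUnique_path x y).exists.choose_spec.exists_ne_adj_of_mem_support hz
      (ne_of_mem_of_not_mem hzA hx) (ne_of_mem_of_not_mem hzA hy)
  exact hne (hA z hzA u₁ u₂ h₁ h₂)

theorem gInvariant_compl_orbit (v : V) : GInvariant G (MulAction.orbit G v)ᶜ := by
  rintro g x hx ⟨h, hh⟩
  refine hx ⟨g⁻¹ * h, ?_⟩
  change (g⁻¹ * h) • v = x
  rw [mul_smul, show h • v = g • x from hh, inv_smul_smul]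

theorem StronglySlideFree.eq_of_adj_of_stabilizer_le (hssf : StronglySlideFree G T)
    {u v w : V} (hvw : T.Adj v w) (hle : MulAction.stabilizer G v ≤ MulAction.stabilizer G w)
    (hvu : T.Adj v u) : u = w := by
  obtain ⟨g, hg, rfl⟩ := hssf v u w hvu hvw (le_inf inf_le_left (inf_le_left.trans hle))
  exact (smul_left_cancel g (hle hg : g • g • u = g • u)).symm

theorem not_stabilizer_le_of_adj (hT : T.IsTree) (hact : ActsOnGraph G T)
    (hni : NoInversions G T) (hmin : MinimalAction G hT) (hssf : StronglySlideFree G T)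
    {v w : V} (hvw : T.Adj v w) : ¬ MulAction.stabilizer G v ≤ MulAction.stabilizer G w := by
  intro hle
  have hleaf : ∀ a ∈ MulAction.orbit G v, ∀ u₁ u₂, T.Adj a u₁ → T.Adj a u₂ → u₁ = u₂ := by
    have hsmul : ∀ (g : G) u, T.Adj (g • v) u → u = g • w := fun g u hu => by
      have hvu : T.Adj v (g⁻¹ • u) := (hact.adj_smul_iff g).mp (by rwa [smul_inv_smul])
      rw [← hssf.eq_of_adj_of_stabilizer_le hvw hle hvu, smul_inv_smul]
    rintro _ ⟨g, rfl⟩ u₁ u₂ h₁ h₂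
    exact (hsmul g u₁ h₁).trans (hsmul g u₂ h₂).symm
  have hw : w ∉ MulAction.orbit G v := by
    rintro ⟨g, hg : g • v = w⟩
    have hw' : T.Adj w (g • w) := hg ▸ hact g v w hvw
    have hv : v = g • w := hleaf w ⟨g, hg⟩ v (g • w) hvw.symm hw'
    exact hni g v w hvw ⟨hg, hv.symm⟩
  have huniv := hmin _ ⟨w, hw⟩ (gInvariant_compl_orbit v)
    (isSubtree_compl_of_subsingleton_adj hT hleaf)
  exact (huniv ▸ Set.mem_univ v : v ∈ (MulAction.orbit G v)ᶜ) (MulAction.mem_orbit_self v)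

theorem eq_of_stabilizer_le (hT : T.IsTree) (hact : ActsOnGraph G T)
    (hni : NoInversions G T) (hmin : MinimalAction G hT) (hssf : StronglySlideFree G T)
    {v w : V} (hle : MulAction.stabilizer G v ≤ MulAction.stabilizer G w) : v = w := by
  by_contra hne
  obtain ⟨x, hvx, hle'⟩ := exists_adj_stabilizer_le hT hact hne hle
  exact not_stabilizer_le_of_adj hT hact hni hmin hssf hvx hle'

end Stabilizers

/-- In a minimal strongly slide-free `G`-tree, no vertex stabilizer fixes an edge;
hence distinct vertices have distinct stabilizers and each vertex stabilizer is a
maximal elliptic subgroup. -/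
theorem stabilizers_maximal_elliptic {G V : Type*} [Group G] [MulAction G V]
    {T : SimpleGraph V} (hT : T.IsTree)
    (hact : ActsOnGraph G T) (hni : NoInversions G T)
    (hmin : MinimalAction G hT) (hssf : StronglySlideFree G T) :
    (∀ v a b : V, T.Adj a b → ¬ MulAction.stabilizer G v ≤ edgeStab G a b) ∧
    (∀ u v : V, MulAction.stabilizer G u = MulAction.stabilizer G v → u = v) ∧
    (∀ v : V, IsElliptic G V (MulAction.stabilizer G v) ∧
      ∀ H : Subgroup G, IsElliptic G V H → MulAction.stabilizer G v ≤ H →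
        H = MulAction.stabilizer G v) := by
  have eq_of_le : ∀ {v w : V}, MulAction.stabilizer G v ≤ MulAction.stabilizer G w → v = w :=
    eq_of_stabilizer_le hT hact hni hmin hssf
  refine ⟨fun v a b hab hle => ?_, fun u v h => eq_of_le h.le, fun v => ⟨⟨v, fun _ => id⟩, ?_⟩⟩
  · have hva : v = a := eq_of_le (hle.trans inf_le_left)
    have hvb : v = b := eq_of_le (hle.trans inf_le_right)
    exact hab.ne (hva.symm.trans hvb)
  · rintro H ⟨w, hw⟩ hle
    have hHw : H ≤ MulAction.stabilizer G w := hw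
    obtain rfl := eq_of_le (hle.trans hHw)
    exact le_antisymm hHw hle
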